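/- Let f, g : S → E be strictly increasing functions from a set S of epsilon numbers into the epsilon numbers. Then f(e) ≤ g(e) for all e ∈ S if and only if for every ordinal x with Ep(x) ⊆ S one has x[f] ≤ x[g]. -/

import Mathlib

open Ordinal

/-- An ordinal is an epsilon number if it is a fixed point of `ω ^ ·`. -/
def IsEpsilon (x : Ordinal.{0}) : Prop := ω ^ x = x

theorem cnf_fst_lt {x : Ordinal.{0}} (h : ¬ ω ^ x = x) {p : Ordinal × Ordinal}
    (hp : p ∈ CNF ω x) : p.1 < x := by
  have hx : x ≠ 0 := by
    rintro rfl
    simp [Ordinal.CNF.zero_right] at hp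
  have h1 : p.1 ≤ Ordinal.log ω x := Ordinal.CNF.fst_le_log hp
  have h2 : Ordinal.log ω x < x := by
    rcases lt_or_eq_of_le (Ordinal.log_le_self ω x) with h' | h'
    · exact h'
    · exfalso
      have hle := Ordinal.opow_log_le_self ω hx
      rw [h'] at hle
      exact h (le_antisymm hle (Ordinal.right_le_opow x one_lt_omega0))
  exact lt_of_le_of_lt h1 h2

open scoped Classical in
/-- The set of epsilon numbers occurring hereditarily in the Cantor normal form of `x`. -/
noncomputable def Ep (x : Ordinal.{0}) : Set Ordinal.{0} :=
  if h : ω ^ x = x then {x}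
  else ⋃ p : {q // q ∈ CNF ω x}, Ep p.1.1
termination_by x
decreasing_by exact cnf_fst_lt h p.2

open scoped Classical in
/-- Simultaneous substitution of the epsilon numbers occurring hereditarily in the
Cantor normal form of `x` by their values under `f`. -/
noncomputable def subst (f : Ordinal.{0} → Ordinal.{0}) (x : Ordinal.{0}) : Ordinal.{0} :=
  if h : ω ^ x = x then f x
  else (((CNF ω x).attach).map (fun p => ω ^ subst f p.1.1 * p.1.2)).sum
termination_by x
decreasing_by exact cnf_fst_lt h p.2

/-! Off the epsilon numbers, `x[f]` is a sum of terms `ω ^ p[f] * c` over the Cantor normal form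
of `x`, each monotone in `p[f]`, while `e[f] = f e` at an epsilon number `e`. Induction on `x` thus
gives `x[f] ≤ x[g]` whenever `f ≤ g` on `Ep x`; conversely, take `x = e`. -/

theorem Ep_of_isEpsilon {x : Ordinal.{0}} (h : IsEpsilon x) : Ep x = {x} := by
  rw [Ep, dif_pos (c := ω ^ x = x) h]

theorem Ep_subset_of_mem_CNF {x : Ordinal.{0}} (h : ¬ IsEpsilon x) {p : Ordinal × Ordinal}
    (hp : p ∈ CNF ω x) : Ep p.1 ⊆ Ep x := by
  rw [Ep.eq_def x, dif_neg (c := ω ^ x = x) h]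
  exact Set.subset_iUnion_of_subset ⟨p, hp⟩ le_rfl

theorem subst_of_isEpsilon (f : Ordinal.{0} → Ordinal.{0}) {x : Ordinal.{0}} (h : IsEpsilon x) :
    subst f x = f x := by
  rw [subst, dif_pos (c := ω ^ x = x) h]

theorem subst_of_not_isEpsilon (f : Ordinal.{0} → Ordinal.{0}) {x : Ordinal.{0}}
    (h : ¬ IsEpsilon x) :
    subst f x = (((CNF ω x).attach).map (fun p => ω ^ subst f p.1.1 * p.1.2)).sum := by
  rw [subst, dif_neg (c := ω ^ x = x) h]

theorem subst_le_subst_of_le_on {S : Set Ordinal.{0}} {f g : Ordinal.{0} → Ordinal.{0}}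
    (hfg : ∀ e ∈ S, f e ≤ g e) (x : Ordinal.{0}) (hx : Ep x ⊆ S) : subst f x ≤ subst g x := by
  induction x using WellFoundedLT.induction with
  | _ x IH =>
    by_cases hε : IsEpsilon x
    · rw [subst_of_isEpsilon f hε, subst_of_isEpsilon g hε]
      exact hfg x (hx (by simp [Ep_of_isEpsilon hε]))
    · rw [subst_of_not_isEpsilon f hε, subst_of_not_isEpsilon g hε]
      refine List.sum_le_sum fun p _ => mul_le_mul_left ?_ _
      exact opow_le_opow_right omega0_pos
        (IH _ (cnf_fst_lt hε p.2) ((Ep_subset_of_mem_CNF hε p.2).trans hx))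

theorem stmt6_general (S : Set Ordinal.{0}) (f g : Ordinal → Ordinal)
    (hS : ∀ e ∈ S, IsEpsilon e) :
    (∀ e ∈ S, f e ≤ g e) ↔
      (∀ x : Ordinal, Ep x ⊆ S → subst f x ≤ subst g x) := by
  refine ⟨subst_le_subst_of_le_on, fun h e he => ?_⟩
  have hEp : Ep e ⊆ S := by simpa [Ep_of_isEpsilon (hS e he)] using he
  simpa only [subst_of_isEpsilon _ (hS e he)] using h e hEp

theorem stmt6 (S : Set Ordinal.{0}) (f g : Ordinal → Ordinal)
    (hS : ∀ e ∈ S, IsEpsilon e)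
    (hfE : ∀ e ∈ S, IsEpsilon (f e)) (hgE : ∀ e ∈ S, IsEpsilon (g e))
    (hf : StrictMonoOn f S) (hg : StrictMonoOn g S) :
    (∀ e ∈ S, f e ≤ g e) ↔
      (∀ x : Ordinal, Ep x ⊆ S → subst f x ≤ subst g x) :=
  stmt6_general S f g hS
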